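/- Every continuous piecewise rational function u : ℝ → ℝ is the value function of some two-player zero-sum polynomial game (i.e., u ∈ 𝒱). -/

import Mathlib

/-!
Matrix games have saddle points (Sion's minimax theorem), so a value is certified by a pair of
optimal strategies. Hence value functions are closed under `-`, `⊔`, `⊓` and adding polynomials,
and `matrixValue` is 1-Lipschitz in the entries, so every value function `f` satisfies
`|f z - f z₀| ≤ |z - z₀| P(z)` for a polynomial `P`; this lets two value functions that agree at
`z₀` be glued there. On each piece, continuity of `u` allows cancelling `gcd Q R`, so that the
denominator has no zero on the closed piece, and then `Q / R = Q R / R²` is the value of a `2 × 2`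
game wherever `R²` exceeds a positive bound. Gluing the pieces from left to right gives `u`.
-/

open Polynomial

/-- The value of a finite two-player zero-sum matrix game with payoff matrix `G`:
`sup` over mixed strategies of Player 1 of `inf` over mixed strategies of Player 2
of the expected payoff. -/
noncomputable def matrixValue {A B : Type} [Fintype A] [Fintype B] (G : A → B → ℝ) : ℝ :=
  ⨆ x : stdSimplex ℝ A, ⨅ y : stdSimplex ℝ B, ∑ a : A, ∑ b : B, x.1 a * G a b * y.1 b

/-- `u ∈ 𝒱`: `u` is the value function of some two-player zero-sum polynomial game,
i.e. there are finite nonempty strategy sets `A`, `B` and a matrix `G` of real polynomials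
such that `u z` is the value of the matrix game `G` evaluated at `z`, for every `z`. -/
def InV (u : ℝ → ℝ) : Prop :=
  ∃ (A B : Type) (iA : Fintype A) (iB : Fintype B), Nonempty A ∧ Nonempty B ∧
    ∃ G : A → B → Polynomial ℝ,
      ∀ z : ℝ, u z = @matrixValue A B iA iB fun a b => (G a b).eval z

/-- `u` is piecewise rational: there are `K + 2` points
`⊥ = h 0 < h 1 < ⋯ < h (K+1) = ⊤` (the interior ones being real) and rational functions
`Q k / R k` with `R k` nonvanishing on `(h k, h (k+1))`, such that `u = Q k / R k` there. -/
def PiecewiseRational (u : ℝ → ℝ) : Prop :=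
  ∃ (K : ℕ) (h : Fin (K + 2) → EReal) (Q R : Fin (K + 1) → Polynomial ℝ),
    StrictMono h ∧ h 0 = ⊥ ∧ h (Fin.last (K + 1)) = ⊤ ∧
    ∀ (k : Fin (K + 1)) (z : ℝ), h k.castSucc < (z : EReal) → (z : EReal) < h k.succ →
      (R k).eval z ≠ 0 ∧ u z = (Q k).eval z / (R k).eval z

open Matrix Set

section MatrixGame

variable {A B : Type} [Fintype A] [Fintype B]

lemma dotProduct_le_of_mem_stdSimplex {x w : A → ℝ} {c : ℝ} (hx : x ∈ stdSimplex ℝ A)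
    (hw : ∀ a, w a ≤ c) : x ⬝ᵥ w ≤ c :=
  calc x ⬝ᵥ w ≤ ∑ a, x a * c :=
        Finset.sum_le_sum fun a _ => mul_le_mul_of_nonneg_left (hw a) (hx.1 a)
    _ = c := by rw [← Finset.sum_mul, hx.2, one_mul]

lemma le_dotProduct_of_mem_stdSimplex {x w : A → ℝ} {c : ℝ} (hx : x ∈ stdSimplex ℝ A)
    (hw : ∀ a, c ≤ w a) : c ≤ x ⬝ᵥ w := by
  simpa [dotProduct_neg] using dotProduct_le_of_mem_stdSimplex (w := -w) (c := -c) hx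
    fun a => neg_le_neg (hw a)

lemma matrixValue_eq_iSup_iInf (G : Matrix A B ℝ) :
    matrixValue G = ⨆ x : stdSimplex ℝ A, ⨅ y : stdSimplex ℝ B, x.1 ⬝ᵥ (G *ᵥ y.1) := by
  simp only [matrixValue, dotProduct, mulVec, Finset.mul_sum, mul_assoc]

lemma bddBelow_range_dotProduct_mulVec (G : Matrix A B ℝ) (x : A → ℝ) :
    BddBelow (range fun y : stdSimplex ℝ B => x ⬝ᵥ (G *ᵥ y.1)) := by
  have := (isCompact_stdSimplex ℝ B).bddBelow_image (f := fun y => x ⬝ᵥ (G *ᵥ y)) (by fun_prop)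
  rwa [image_eq_range] at this

def IsSaddleValue (G : Matrix A B ℝ) (x : A → ℝ) (y : B → ℝ) (v : ℝ) : Prop :=
  x ∈ stdSimplex ℝ A ∧ y ∈ stdSimplex ℝ B ∧ (∀ b, v ≤ (x ᵥ* G) b) ∧ ∀ a, (G *ᵥ y) a ≤ v

lemma IsSaddleValue.matrixValue_eq {G : Matrix A B ℝ} {x : A → ℝ} {y : B → ℝ} {v : ℝ}
    (h : IsSaddleValue G x y v) : matrixValue G = v := by
  obtain ⟨hx, hy, hxv, hyv⟩ := h
  have : Nonempty (stdSimplex ℝ A) := ⟨⟨x, hx⟩⟩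
  have : Nonempty (stdSimplex ℝ B) := ⟨⟨y, hy⟩⟩
  have hle : ∀ x' : stdSimplex ℝ A, ⨅ y' : stdSimplex ℝ B, x'.1 ⬝ᵥ (G *ᵥ y'.1) ≤ v := fun x' =>
    (ciInf_le (bddBelow_range_dotProduct_mulVec G x'.1) ⟨y, hy⟩).trans
      (dotProduct_le_of_mem_stdSimplex x'.2 hyv)
  have hge : v ≤ ⨅ y' : stdSimplex ℝ B, x ⬝ᵥ (G *ᵥ y'.1) := le_ciInf fun y' => by
    rw [dotProduct_mulVec, dotProduct_comm]
    exact le_dotProduct_of_mem_stdSimplex y'.2 hxv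
  rw [matrixValue_eq_iSup_iInf]
  exact le_antisymm (ciSup_le hle)
    (le_ciSup_of_le ⟨v, by rintro _ ⟨x', rfl⟩; exact hle x'⟩ ⟨x, hx⟩ hge)

lemma IsSaddleValue.neg_transpose {G : Matrix A B ℝ} {x : A → ℝ} {y : B → ℝ} {v : ℝ}
    (h : IsSaddleValue G x y v) : IsSaddleValue (-Gᵀ) y x (-v) := by
  obtain ⟨hx, hy, hxG, hyG⟩ := h
  refine ⟨hy, hx, fun a => ?_, fun b => ?_⟩
  · simpa [vecMul_neg, vecMul_transpose] using hyG a
  · simpa [neg_mulVec, mulVec_transpose] using hxG b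

variable [Nonempty A] [Nonempty B]

lemma exists_isSaddleValue (G : Matrix A B ℝ) : ∃ x y, IsSaddleValue G x y (matrixValue G) := by
  classical
  obtain ⟨y, hy, x, hx, hsaddle⟩ := Sion.exists_isSaddlePointOn
    (f := fun y x => toLinearMap₂' ℝ G x y)
    ⟨_, single_mem_stdSimplex ℝ (Classical.arbitrary B)⟩ (convex_stdSimplex ℝ B)
    (isCompact_stdSimplex ℝ B)
    (fun x _ => show LowerSemicontinuousOn (toLinearMap₂' ℝ G x) _ from
      (LinearMap.continuous_of_finiteDimensional _).lowerSemicontinuous.lowerSemicontinuousOn _)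
    (fun x _ => ((toLinearMap₂' ℝ G x).convexOn (convex_stdSimplex ℝ B)).quasiconvexOn)
    (convex_stdSimplex ℝ A)
    ⟨_, single_mem_stdSimplex ℝ (Classical.arbitrary A)⟩ (isCompact_stdSimplex ℝ A)
    (fun y _ => show UpperSemicontinuousOn ((toLinearMap₂' ℝ G).flip y) _ from
      (LinearMap.continuous_of_finiteDimensional _).upperSemicontinuous.upperSemicontinuousOn _)
    (fun y _ => show QuasiconcaveOn ℝ _ ((toLinearMap₂' ℝ G).flip y) from
      (((toLinearMap₂' ℝ G).flip y).concaveOn (convex_stdSimplex ℝ A)).quasiconcaveOn)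
  simp only [toLinearMap₂'_apply'] at hsaddle
  have hxy : IsSaddleValue G x y (x ⬝ᵥ (G *ᵥ y)) := by
    refine ⟨hx, hy, fun b => ?_, fun a => ?_⟩
    · have : x ⬝ᵥ (G *ᵥ y) ≤ x ⬝ᵥ (G *ᵥ Pi.single b 1) :=
        hsaddle _ (single_mem_stdSimplex ℝ b) _ hx
      rwa [dotProduct_mulVec x G (Pi.single b 1), dotProduct_single_one] at this
    · simpa using hsaddle _ hy _ (single_mem_stdSimplex ℝ a)
  exact ⟨x, y, hxy.matrixValue_eq ▸ hxy⟩

lemma matrixValue_le_add {G G' : Matrix A B ℝ} {ε : ℝ} (h : ∀ a b, G a b ≤ G' a b + ε) :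
    matrixValue G ≤ matrixValue G' + ε := by
  obtain ⟨x, -, hx, -, hxG, -⟩ := exists_isSaddleValue G
  obtain ⟨-, y, -, hy, -, hyG'⟩ := exists_isSaddleValue G'
  have hrow : ∀ a, (G *ᵥ y) a ≤ matrixValue G' + ε := fun a =>
    calc (G *ᵥ y) a ≤ (G' *ᵥ y) a + ε := by
          have hsub : (G *ᵥ y) a - (G' *ᵥ y) a = y ⬝ᵥ fun b => G a b - G' a b := by
            simp only [mulVec, dotProduct, ← Finset.sum_sub_distrib, mul_sub, mul_comm]
          rw [← sub_le_iff_le_add', hsub]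
          exact dotProduct_le_of_mem_stdSimplex hy fun b => sub_le_iff_le_add'.2 (h a b)
      _ ≤ matrixValue G' + ε := by linarith [hyG' a]
  calc matrixValue G ≤ x ⬝ᵥ (G *ᵥ y) := by
        rw [dotProduct_mulVec, dotProduct_comm]
        exact le_dotProduct_of_mem_stdSimplex hy hxG
    _ ≤ matrixValue G' + ε := dotProduct_le_of_mem_stdSimplex hx hrow

lemma abs_matrixValue_sub_le {G G' : Matrix A B ℝ} {ε : ℝ} (h : ∀ a b, |G a b - G' a b| ≤ ε) :
    |matrixValue G - matrixValue G'| ≤ ε := by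
  have h₁ := matrixValue_le_add fun a b => sub_le_iff_le_add'.1 (abs_le.1 (h a b)).2
  have h₂ := matrixValue_le_add (G := G') (G' := G) fun a b => by linarith [(abs_le.1 (h a b)).1]
  exact abs_sub_le_iff.2 ⟨by linarith, by linarith⟩

lemma matrixValue_add_const (G : Matrix A B ℝ) (c : ℝ) :
    matrixValue (fun a b => G a b + c) = matrixValue G + c :=
  le_antisymm (matrixValue_le_add fun _ _ => le_rfl) <| by
    have := matrixValue_le_add (G := G) (G' := fun a b => G a b + c) (ε := -c) fun _ _ => by simp
    linarith

lemma matrixValue_neg_transpose (G : Matrix A B ℝ) : matrixValue (-Gᵀ) = -matrixValue G := by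
  obtain ⟨x, y, h⟩ := exists_isSaddleValue G
  exact h.neg_transpose.matrixValue_eq

end MatrixGame

section MaxGame

variable {A₁ B₁ A₂ B₂ : Type} [Fintype B₁] [Fintype B₂]

/-- Player 1 chooses which of the two games is played, Player 2 answers in both. -/
def maxGame {α : Type*} (G₁ : Matrix A₁ B₁ α) (G₂ : Matrix A₂ B₂ α) :
    Matrix (A₁ ⊕ A₂) (B₁ × B₂) α :=
  fun a b => a.elim (G₁ · b.1) (G₂ · b.2)

lemma mul_mem_stdSimplex_prod {y₁ : B₁ → ℝ} {y₂ : B₂ → ℝ} (hy₁ : y₁ ∈ stdSimplex ℝ B₁)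
    (hy₂ : y₂ ∈ stdSimplex ℝ B₂) : (fun b => y₁ b.1 * y₂ b.2) ∈ stdSimplex ℝ (B₁ × B₂) :=
  ⟨fun b => mul_nonneg (hy₁.1 _) (hy₂.1 _), by
    simp [Fintype.sum_prod_type, ← Finset.mul_sum, hy₂.2, hy₁.2]⟩

variable {G₁ : Matrix A₁ B₁ ℝ} {G₂ : Matrix A₂ B₂ ℝ} {x₁ : A₁ → ℝ} {y₁ : B₁ → ℝ}
  {x₂ : A₂ → ℝ} {y₂ : B₂ → ℝ} {v₁ v₂ : ℝ}

lemma maxGame_mulVec_inl (hy₂ : y₂ ∈ stdSimplex ℝ B₂) (a : A₁) :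
    (maxGame G₁ G₂ *ᵥ fun b => y₁ b.1 * y₂ b.2) (.inl a) = (G₁ *ᵥ y₁) a := by
  simp [maxGame, mulVec, dotProduct, Fintype.sum_prod_type, ← mul_assoc, ← Finset.mul_sum,
    hy₂.2]

lemma maxGame_mulVec_inr (hy₁ : y₁ ∈ stdSimplex ℝ B₁) (a : A₂) :
    (maxGame G₁ G₂ *ᵥ fun b => y₁ b.1 * y₂ b.2) (.inr a) = (G₂ *ᵥ y₂) a := by
  simp [maxGame, mulVec, dotProduct, Fintype.sum_prod_type_right, mul_left_comm _ (y₁ _),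
    ← Finset.sum_mul, hy₁.2]

variable [Fintype A₁] [Fintype A₂]

lemma sum_elim_mem_stdSimplex_left {x : A₁ → ℝ} (hx : x ∈ stdSimplex ℝ A₁) :
    Sum.elim x (0 : A₂ → ℝ) ∈ stdSimplex ℝ (A₁ ⊕ A₂) :=
  ⟨fun a => a.rec hx.1 fun _ => le_rfl, by simp [Fintype.sum_sum_type, hx.2]⟩

lemma sum_elim_mem_stdSimplex_right {x : A₂ → ℝ} (hx : x ∈ stdSimplex ℝ A₂) :
    Sum.elim (0 : A₁ → ℝ) x ∈ stdSimplex ℝ (A₁ ⊕ A₂) :=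
  ⟨fun a => a.rec (fun _ => le_rfl) hx.1, by simp [Fintype.sum_sum_type, hx.2]⟩

lemma IsSaddleValue.maxGame_of_le (h₁ : IsSaddleValue G₁ x₁ y₁ v₁)
    (h₂ : IsSaddleValue G₂ x₂ y₂ v₂) (hv : v₂ ≤ v₁) :
    IsSaddleValue (maxGame G₁ G₂) (Sum.elim x₁ 0) (fun b => y₁ b.1 * y₂ b.2) v₁ := by
  refine ⟨sum_elim_mem_stdSimplex_left h₁.1, mul_mem_stdSimplex_prod h₁.2.1 h₂.2.1,
    fun b => ?_, ?_⟩
  · simpa [vecMul, dotProduct, Fintype.sum_sum_type, maxGame] using h₁.2.2.1 b.1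
  · rintro (a | a)
    · rw [maxGame_mulVec_inl h₂.2.1]; exact h₁.2.2.2 a
    · rw [maxGame_mulVec_inr h₁.2.1]; exact (h₂.2.2.2 a).trans hv

lemma IsSaddleValue.maxGame_of_ge (h₁ : IsSaddleValue G₁ x₁ y₁ v₁)
    (h₂ : IsSaddleValue G₂ x₂ y₂ v₂) (hv : v₁ ≤ v₂) :
    IsSaddleValue (maxGame G₁ G₂) (Sum.elim 0 x₂) (fun b => y₁ b.1 * y₂ b.2) v₂ := by
  refine ⟨sum_elim_mem_stdSimplex_right h₂.1, mul_mem_stdSimplex_prod h₁.2.1 h₂.2.1,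
    fun b => ?_, ?_⟩
  · simpa [vecMul, dotProduct, Fintype.sum_sum_type, maxGame] using h₂.2.2.1 b.2
  · rintro (a | a)
    · rw [maxGame_mulVec_inl h₂.2.1]; exact (h₁.2.2.2 a).trans hv
    · rw [maxGame_mulVec_inr h₁.2.1]; exact h₂.2.2.2 a

lemma matrixValue_maxGame [Nonempty A₁] [Nonempty B₁] [Nonempty A₂] [Nonempty B₂]
    (G₁ : Matrix A₁ B₁ ℝ) (G₂ : Matrix A₂ B₂ ℝ) :
    matrixValue (maxGame G₁ G₂) = max (matrixValue G₁) (matrixValue G₂) := by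
  obtain ⟨x₁, y₁, h₁⟩ := exists_isSaddleValue G₁
  obtain ⟨x₂, y₂, h₂⟩ := exists_isSaddleValue G₂
  rcases le_total (matrixValue G₂) (matrixValue G₁) with hv | hv
  · rw [max_eq_left hv, (h₁.maxGame_of_le h₂ hv).matrixValue_eq]
  · rw [max_eq_right hv, (h₁.maxGame_of_ge h₂ hv).matrixValue_eq]

end MaxGame

lemma inV_iff {u : ℝ → ℝ} : InV u ↔ ∃ (A B : Type) (_ : Fintype A) (_ : Fintype B),
    Nonempty A ∧ Nonempty B ∧
      ∃ G : Matrix A B ℝ[X], u = fun z => matrixValue (G.map (eval z)) := by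
  simp only [InV, funext_iff]
  rfl

lemma InV.mk {A B : Type} [Fintype A] [Fintype B] [Nonempty A] [Nonempty B]
    (G : Matrix A B ℝ[X]) : InV fun z => matrixValue (G.map (eval z)) :=
  inV_iff.2 ⟨A, B, _, _, ‹_›, ‹_›, G, rfl⟩

section ValueFunction

variable {f g : ℝ → ℝ}

lemma InV.neg (hf : InV f) : InV (-f) := by
  obtain ⟨A, B, _, _, _, _, G, rfl⟩ := inV_iff.1 hf
  convert InV.mk (-Gᵀ) using 1
  ext z
  rw [Pi.neg_apply, ← matrixValue_neg_transpose]
  congr 1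
  ext b a
  simp

lemma InV.add_polynomial (hf : InV f) (p : ℝ[X]) : InV fun z => f z + p.eval z := by
  obtain ⟨A, B, _, _, _, _, G, rfl⟩ := inV_iff.1 hf
  convert InV.mk (Matrix.of fun a b => G a b + p) using 1
  ext z
  rw [← matrixValue_add_const]
  congr 1
  ext a b
  simp

lemma InV.max (hf : InV f) (hg : InV g) : InV (f ⊔ g) := by
  obtain ⟨A₁, B₁, _, _, _, _, G₁, rfl⟩ := inV_iff.1 hf
  obtain ⟨A₂, B₂, _, _, _, _, G₂, rfl⟩ := inV_iff.1 hg
  convert InV.mk (maxGame G₁ G₂) using 1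
  ext z
  rw [Pi.sup_apply, ← matrixValue_maxGame]
  congr 1
  ext (a | a) b <;> rfl

lemma InV.min (hf : InV f) (hg : InV g) : InV (f ⊓ g) := by
  convert (hf.neg.max hg.neg).neg using 1
  ext z
  simp [max_neg_neg]

lemma Polynomial.exists_abs_eval_le {ι : Type*} [Fintype ι] (p : ι → ℝ[X]) :
    ∃ P : ℝ[X], ∀ i z, |(p i).eval z| ≤ P.eval z := by
  refine ⟨1 + ∑ i, p i ^ 2, fun i z => ?_⟩
  have hsq : (p i).eval z ^ 2 ≤ ∑ j, (p j).eval z ^ 2 :=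
    Finset.single_le_sum (f := fun j => (p j).eval z ^ 2) (fun j _ => sq_nonneg _)
      (Finset.mem_univ i)
  simp only [eval_add, eval_one, eval_finsetSum, eval_pow]
  nlinarith [sq_abs ((p i).eval z), abs_nonneg ((p i).eval z)]

lemma InV.exists_abs_sub_le (hf : InV f) (z₀ : ℝ) :
    ∃ P : ℝ[X], ∀ z, |f z - f z₀| ≤ |z - z₀| * P.eval z := by
  obtain ⟨A, B, _, _, _, _, G, rfl⟩ := inV_iff.1 hf
  have hdvd : ∀ a b, X - C z₀ ∣ G a b - C ((G a b).eval z₀) := fun a b =>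
    dvd_iff_isRoot.2 (by simp)
  choose q hq using hdvd
  obtain ⟨P, hP⟩ := Polynomial.exists_abs_eval_le fun ab : A × B => q ab.1 ab.2
  refine ⟨P, fun z => abs_matrixValue_sub_le fun a b => ?_⟩
  have hfactor := congr_arg (eval z) (hq a b)
  simp only [eval_sub, eval_C, eval_mul, eval_X] at hfactor
  rw [Matrix.map_apply, Matrix.map_apply, hfactor, abs_mul]
  exact mul_le_mul_of_nonneg_left (hP (a, b) z) (abs_nonneg _)

lemma max_min_min_eq_left {x y t t' : ℝ} (h : |x - y| ≤ t) (ht' : t' ≤ 0) :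
    max (min x (y + t)) (min y (x + t')) = x := by
  have := abs_le.1 h
  exact le_antisymm (max_le (min_le_left _ _) (min_le_of_right_le (by linarith)))
    (le_max_of_le_left (le_min le_rfl (by linarith)))

lemma InV.piecewise (hf : InV f) (hg : InV g) {z₀ : ℝ} (h : f z₀ = g z₀) :
    InV fun z => if z ≤ z₀ then f z else g z := by
  obtain ⟨P, hP⟩ := hf.exists_abs_sub_le z₀
  obtain ⟨P', hP'⟩ := hg.exists_abs_sub_le z₀
  have hfg : ∀ z, |f z - g z| ≤ |z - z₀| * (P + P').eval z := fun z =>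
    calc |f z - g z| = |(f z - f z₀) - (g z - g z₀)| := by rw [h]; ring_nf
      _ ≤ |f z - f z₀| + |g z - g z₀| := abs_sub _ _
      _ ≤ |z - z₀| * (P + P').eval z := by
        rw [eval_add, mul_add]; exact add_le_add (hP z) (hP' z)
  -- the slopes `±(z - z₀) (P + P')` dominate `f - g`, so the lattice expression
  -- picks `f` left of `z₀` and `g` right of it
  convert (hf.min (hg.add_polynomial ((C z₀ - X) * (P + P')))).max
    (hg.min (hf.add_polynomial ((X - C z₀) * (P + P')))) using 1
  ext z
  have hfgz := hfg z
  have hnonneg := (abs_nonneg _).trans hfgz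
  simp only [Pi.sup_apply, Pi.inf_apply, eval_mul, eval_sub, eval_C, eval_X]
  split_ifs with hz
  · rw [abs_of_nonpos (sub_nonpos.2 hz), neg_sub] at hfgz hnonneg
    exact (max_min_min_eq_left hfgz (by nlinarith)).symm
  · rw [abs_of_pos (sub_pos.2 (not_le.1 hz))] at hfgz hnonneg
    rw [abs_sub_comm] at hfgz
    rw [max_comm]
    exact (max_min_min_eq_left hfgz (by nlinarith)).symm

end ValueFunction

lemma Polynomial.exists_pos_le_eval {p : ℝ[X]} {S : Set ℝ} (hS : IsClosed S)
    (hp : ∀ z ∈ S, 0 < p.eval z) : ∃ δ > 0, ∀ z ∈ S, δ ≤ p.eval z := by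
  rcases S.eq_empty_or_nonempty with rfl | ⟨z₀, hz₀⟩
  · exact ⟨1, one_pos, by simp⟩
  have hgrowth : ∀ᶠ z in Filter.cocompact ℝ, p.eval z₀ ≤ |p.eval z| := by
    rcases le_or_gt p.degree 0 with hdeg | hdeg
    · rw [eq_C_of_degree_le_zero hdeg]
      exact Filter.Eventually.of_forall fun _ => by simp [le_abs_self]
    · exact (p.tendsto_norm_atTop hdeg tendsto_norm_cocompact_atTop).eventually_ge_atTop _
  obtain ⟨z₁, hz₁, hmin⟩ := p.continuous.continuousOn.exists_isMinOn' hS hz₀ <| by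
    filter_upwards [hgrowth.filter_mono inf_le_left,
      Filter.mem_inf_of_right (Filter.mem_principal_self S)] with z hz hzS
    rwa [abs_of_pos (hp z hzS)] at hz
  exact ⟨_, hp z₁ hz₁, fun z hz => hmin hz⟩

/-- Both players' strategy `((r - 1) / r, 1 / r)` equalizes the payoffs; it needs `1 ≤ r`. -/
lemma matrixValue_fin_two_eq_div {q r : ℝ} (hr : 1 ≤ r) :
    matrixValue !![0, q; q, q * (2 - r)] = q / r := by
  have hr0 : r ≠ 0 := by positivity
  have hx : ![(r - 1) / r, 1 / r] ∈ stdSimplex ℝ (Fin 2) := by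
    refine ⟨fun i => ?_, ?_⟩
    · fin_cases i
      exacts [div_nonneg (sub_nonneg.2 hr) (by positivity), one_div_nonneg.2 (by positivity)]
    · simp only [Fin.sum_univ_two, cons_val_zero, cons_val_one, cons_val_fin_one]
      field_simp
      ring
  refine IsSaddleValue.matrixValue_eq ⟨hx, hx, fun b => le_of_eq ?_, fun a => le_of_eq ?_⟩ <;>
  [fin_cases b; fin_cases a] <;>
  simp only [vecMul, mulVec, dotProduct, Fin.sum_univ_two, of_apply, cons_val', cons_val_zero,
    cons_val_one, cons_val_fin_one, Fin.zero_eta, Fin.mk_one] <;>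
  field_simp <;> ring

lemma exists_inV_eqOn_div {S : Set ℝ} (hS : IsClosed S) {Q R : ℝ[X]}
    (hR : ∀ z ∈ S, R.eval z ≠ 0) : ∃ v, InV v ∧ EqOn v (fun z => Q.eval z / R.eval z) S := by
  obtain ⟨δ, hδ, hδR⟩ := (R ^ 2).exists_pos_le_eval hS fun z hz => by
    simpa [sq_pos_iff] using hR z hz
  set q := C δ⁻¹ * (Q * R)
  set r := C δ⁻¹ * R ^ 2
  refine ⟨_, InV.mk !![0, q; q, q * (2 - r)], fun z hz => ?_⟩
  have hr : 1 ≤ r.eval z := by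
    simp only [r, eval_mul, eval_C]
    rw [le_inv_mul_iff₀ hδ, mul_one]
    exact hδR z hz
  have hmap : (!![0, q; q, q * (2 - r)]).map (eval z) =
      !![0, q.eval z; q.eval z, q.eval z * (2 - r.eval z)] := by
    ext i j; fin_cases i <;> fin_cases j <;> simp
  have := hR z hz
  simp only [hmap, matrixValue_fin_two_eq_div hr]
  simp only [q, r, eval_mul, eval_C, eval_pow]
  field_simp

lemma exists_div_eqOn_closure {u : ℝ → ℝ} (hu : Continuous u) {I : Set ℝ} {Q R : ℝ[X]}
    (hQR : ∀ z ∈ I, R.eval z ≠ 0 ∧ u z = Q.eval z / R.eval z) :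
    ∃ Q' R' : ℝ[X], ∀ z ∈ closure I, R'.eval z ≠ 0 ∧ u z = Q'.eval z / R'.eval z := by
  rcases I.eq_empty_or_nonempty with rfl | ⟨z₀, hz₀⟩
  · exact ⟨0, 1, by simp⟩
  have hR0 : R ≠ 0 := fun h => (hQR z₀ hz₀).1 (by simp [h])
  have hd : gcd Q R ≠ 0 := gcd_ne_zero_of_right hR0
  have hQ := EuclideanDomain.mul_div_cancel' hd (gcd_dvd_left Q R)
  have hR := EuclideanDomain.mul_div_cancel' hd (gcd_dvd_right Q R)
  obtain ⟨a, b, hab⟩ := isCoprime_div_gcd_div_gcd (p := Q) hR0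
  set Q' := Q / gcd Q R
  set R' := R / gcd Q R
  have hI : EqOn (fun z => u z * R'.eval z) (fun z => Q'.eval z) I := fun z hz => by
    obtain ⟨hRz, huz⟩ := hQR z hz
    have hRe : R.eval z = (gcd Q R).eval z * R'.eval z := by rw [← eval_mul, hR]
    have hQe : Q.eval z = (gcd Q R).eval z * Q'.eval z := by rw [← eval_mul, hQ]
    obtain ⟨hdz, hR'z⟩ := mul_ne_zero_iff.1 (hRe ▸ hRz)
    simp only [huz, hQe, hRe]
    field_simp
  refine ⟨Q', R', fun z hz => ?_⟩
  have hz' : u z * R'.eval z = Q'.eval z := hI.closure (hu.mul R'.continuous) Q'.continuous hz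
  -- a common zero of the coprime `Q'` and `R'` is impossible
  have hRz : R'.eval z ≠ 0 := fun h0 => by
    have := congr_arg (eval z) hab
    simp [h0, ← hz'] at this
  exact ⟨hRz, eq_div_of_mul_eq hRz hz'⟩

lemma EReal.closure_preimage_coe_Ioo {a b : EReal} (hab : a < b) :
    closure ((↑) ⁻¹' Ioo a b : Set ℝ) = (↑) ⁻¹' Icc a b := by
  rw [← EReal.isOpenEmbedding_coe.isOpenMap.preimage_closure_eq_closure_preimage
    continuous_coe_real_ereal, closure_Ioo hab.ne]

lemma inV_of_eqOn_pieces {K : ℕ} {h : Fin (K + 2) → EReal} (hmono : StrictMono h)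
    (h0 : h 0 = ⊥) (hlast : h (Fin.last (K + 1)) = ⊤) {u : ℝ → ℝ}
    (hpiece : ∀ k : Fin (K + 1), ∃ v, InV v ∧ EqOn v u ((↑) ⁻¹' Icc (h k.castSucc) (h k.succ))) :
    InV u := by
  have key : ∀ j : Fin (K + 1), ∃ v, InV v ∧ EqOn v u ((↑) ⁻¹' Iic (h j.succ)) := by
    intro j
    induction j using Fin.induction with
    | zero =>
      obtain ⟨v, hv, hvu⟩ := hpiece 0
      exact ⟨v, hv, fun z hz => hvu ⟨by simp [h0], hz⟩⟩
    | succ i ih =>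
      obtain ⟨U, hU, hUu⟩ := ih
      obtain ⟨v, hv, hvu⟩ := hpiece i.succ
      have hbot : h i.succ.castSucc ≠ ⊥ := by
        rw [← h0]; exact (hmono (Fin.castSucc_pos' i.succ_pos)).ne'
      have htop : h i.succ.castSucc ≠ ⊤ := by
        rw [← hlast]; exact (hmono (Fin.castSucc_lt_last _)).ne
      set b := (h i.succ.castSucc).toReal
      have hb : (b : EReal) = h i.succ.castSucc := EReal.coe_toReal htop hbot
      have hbU : (b : EReal) ≤ h i.castSucc.succ := by rw [hb, Fin.succ_castSucc]
      have hbv : (b : EReal) ∈ Icc (h i.succ.castSucc) (h i.succ.succ) :=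
        ⟨hb.ge, hb.le.trans (hmono Fin.castSucc_lt_succ).le⟩
      refine ⟨_, hU.piecewise hv ((hUu hbU).trans (hvu hbv).symm), fun z hz => ?_⟩
      split_ifs with hzb
      · exact hUu ((EReal.coe_le_coe_iff.2 hzb).trans hbU)
      · exact hvu ⟨hb ▸ EReal.coe_le_coe_iff.2 (not_le.1 hzb).le, hz⟩
  obtain ⟨v, hv, hvu⟩ := key (Fin.last K)
  convert hv using 1
  ext z
  exact (hvu (by simp [hlast])).symm

/-- Every continuous piecewise rational function `u : ℝ → ℝ` is the value function of
some two-player zero-sum polynomial game. -/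
theorem value_function_of_continuous_piecewise_rational (u : ℝ → ℝ)
    (hcont : Continuous u) (hpr : PiecewiseRational u) :
    InV u := by
  obtain ⟨K, h, Q, R, hmono, h0, hlast, hQR⟩ := hpr
  refine inV_of_eqOn_pieces hmono h0 hlast fun k => ?_
  obtain ⟨Q', R', hQR'⟩ := exists_div_eqOn_closure hcont
    (I := (↑) ⁻¹' Ioo (h k.castSucc) (h k.succ)) fun z hz => hQR k z hz.1 hz.2
  rw [EReal.closure_preimage_coe_Ioo (hmono Fin.castSucc_lt_succ)] at hQR'
  obtain ⟨v, hv, hvQR⟩ := exists_inV_eqOn_div (isClosed_Icc.preimage continuous_coe_real_ereal)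
    fun z hz => (hQR' z hz).1
  exact ⟨v, hv, fun z hz => (hvQR hz).trans (hQR' z hz).2.symm⟩
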